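/- If Λ_ub < m₁/2 + m_s with m₁ > 0, m_s ≥ 0, then for every feedback gain ψ with |ψ₁| ≤ Λ_ub, the pole a = (m_s + ψ₁)/(m₁ + m_s + ψ₁) of the linearized slope-compensated loop satisfies |a| < 1. -/
import Mathlib

theorem slope_comp_stability (m1 ms Λub ψ1 : ℝ) (hm1 : m1 > 0) (hms : ms ≥ 0)
    (hΛ : Λub < m1 / 2 + ms) (hψ : |ψ1| ≤ Λub) (hden : m1 + ms + ψ1 > 0) :
    |(ms + ψ1) / (m1 + ms + ψ1)| < 1 := by
  rw [abs_div, abs_of_pos hden, div_lt_one hden, abs_lt]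
  have := abs_le.mp hψ
  constructor <;> linarith
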